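/- Let p > 2 be a prime, F an algebraically closed field of characteristic p, and 4 ≤ k ≤ p. Let R = F[V_k^+]^{C_{2p}} = F[x_1,...,x_k]^{⟨T_k^+⟩} and set ℓ_1 = x_1, ℓ_2 = x_2^2 − x_1(x_2 + 2x_3), ℓ_3 = x_2^3 + x_1^2(3x_4 − x_2) − 3x_1x_2x_3, and N = x_2^p − x_1^{p−1}x_2, all of which lie in R. Then ℓ_3·N − ℓ_2^{(p+3)/2} lies in the ideal (ℓ_1)R, hence ℓ_3·N ∈ (ℓ_1, ℓ_2)R, but ℓ_3 ∉ (ℓ_1, ℓ_2)R; consequently ℓ_1, ℓ_2, N (which are algebraically independent over F) do not form a regular sequence in R. -/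

import Mathlib

open MvPolynomial

set_option synthInstance.maxHeartbeats 1000000
set_option maxHeartbeats 1000000

noncomputable section

variable (F : Type) [Field F]

/-- The invariant ring (fixed subalgebra) of the algebra endomorphism `σ`;
for `σ` the action of a generator of a finite cyclic group, this is the
ring of invariants of that group. -/
def inva {n : ℕ} (σ : MvPolynomial (Fin n) F →ₐ[F] MvPolynomial (Fin n) F) :
    Subalgebra F (MvPolynomial (Fin n) F) :=
  AlgHom.equalizer σ (AlgHom.id F _)

/-- The linear substitution action of a matrix on the polynomial ring. -/
def matAct {n : ℕ} (M : Matrix (Fin n) (Fin n) F) :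
    MvPolynomial (Fin n) F →ₐ[F] MvPolynomial (Fin n) F :=
  aeval fun i => ∑ j, C (M i j) * X j

/-- The irrelevant (maximal graded) ideal of a graded subalgebra of a
polynomial ring: elements with vanishing constant term. -/
def mmax {n : ℕ} (A : Subalgebra F (MvPolynomial (Fin n) F)) : Ideal A :=
  RingHom.ker ((constantCoeff : MvPolynomial (Fin n) F →+* F).comp A.val.toRingHom)

/-- A graded subalgebra of a polynomial ring is Cohen-Macaulay iff there
is a regular sequence in the irrelevant maximal ideal whose length is the
Krull dimension (i.e. depth = dimension). -/
def IsCM {n : ℕ} (A : Subalgebra F (MvPolynomial (Fin n) F)) : Prop :=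
  ∃ rs : List A, (∀ r ∈ rs, r ∈ mmax F A) ∧ RingTheory.Sequence.IsRegular (↥A) rs ∧
    (rs.length : WithBot ℕ∞) = ringKrullDim ↥A

/-- Gorenstein: Cohen-Macaulay, with one-dimensional socle modulo a maximal
regular sequence (a homogeneous system of parameters). -/
def IsGor {n : ℕ} (A : Subalgebra F (MvPolynomial (Fin n) F)) : Prop :=
  ∃ rs : List A, (∀ r ∈ rs, r ∈ mmax F A) ∧ RingTheory.Sequence.IsRegular (↥A) rs ∧
    (rs.length : WithBot ℕ∞) = ringKrullDim ↥A ∧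
    Module.finrank F (Submodule.restrictScalars F
      ((⊥ : Ideal (↥A ⧸ Ideal.span {x : ↥A | x ∈ rs})).colon
        ((mmax F A).map (Ideal.Quotient.mk (Ideal.span {x : ↥A | x ∈ rs}))))) = 1

/-- A commutative `F`-algebra is a hypersurface if it is isomorphic to a
polynomial ring modulo a single principal ideal. -/
def IsHypersurface (A : Type) [CommRing A] [Algebra F A] : Prop :=
  ∃ (m : ℕ) (f : MvPolynomial (Fin m) F),
    Nonempty (A ≃ₐ[F] (MvPolynomial (Fin m) F ⧸ Ideal.span {f}))

/-- Similarity (conjugacy) of square matrices, i.e. isomorphism of the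
corresponding representations. -/
def MatSimilar {n : ℕ} (M N : Matrix (Fin n) (Fin n) F) : Prop :=
  ∃ P : (Matrix (Fin n) (Fin n) F)ˣ,
    (P : Matrix (Fin n) (Fin n) F) * M * ((P⁻¹ : (Matrix (Fin n) (Fin n) F)ˣ) :
      Matrix (Fin n) (Fin n) F) = N

/-- The representation given by `M` has a direct summand isomorphic to the
one-dimensional trivial representation. -/
def HasTrivialSummand {n : ℕ} (M : Matrix (Fin n) (Fin n) F) : Prop :=
  ∃ v : Fin n → F, v ≠ 0 ∧ M.mulVec v = v ∧
    ∃ Uc : Submodule F (Fin n → F), IsCompl (Submodule.span F {v}) Uc ∧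
      ∀ u ∈ Uc, M.mulVec u ∈ Uc

/-- A representation is reduced if no indecomposable direct summand is the
one-dimensional trivial representation. -/
def Reduced {n : ℕ} (M : Matrix (Fin n) (Fin n) F) : Prop :=
  ¬ HasTrivialSummand F M

/-- Matrix consisting of Jordan-like blocks: diagonal entries given by `d`,
with subdiagonal entries `1` exactly at the columns in `ones`. -/
def jmat (n : ℕ) (d : ℕ → F) (ones : Finset ℕ) : Matrix (Fin n) (Fin n) F :=
  fun i j => if (i : ℕ) = j then d i else
    if (i : ℕ) = (j : ℕ) + 1 ∧ (j : ℕ) ∈ ones then 1 else 0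


/-- The action of `T_k⁺` (Jordan block, diagonal `1`) on `F[x₁,…,x_k]`. -/
def sigPlusK (k : ℕ) : MvPolynomial (Fin k) F →ₐ[F] MvPolynomial (Fin k) F :=
  aeval fun i =>
    (if i.1 = 0 then 0 else
      X ⟨i.1 - 1, lt_of_le_of_lt (Nat.sub_le _ _) i.isLt⟩) + X i

/-- `ℓ₁ = x₁`. -/
def ell1 (k : ℕ) (h : 4 ≤ k) : MvPolynomial (Fin k) F := X ⟨0, by omega⟩

/-- `ℓ₂ = x₂² - x₁(x₂ + 2x₃)`. -/
def ell2 (k : ℕ) (h : 4 ≤ k) : MvPolynomial (Fin k) F :=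
  X ⟨1, by omega⟩ ^ 2 - X ⟨0, by omega⟩ * (X ⟨1, by omega⟩ + 2 * X ⟨2, by omega⟩)

/-- `ℓ₃ = x₂³ + x₁²(3x₄ - x₂) - 3x₁x₂x₃`. -/
def ell3 (k : ℕ) (h : 4 ≤ k) : MvPolynomial (Fin k) F :=
  X ⟨1, by omega⟩ ^ 3 +
    X ⟨0, by omega⟩ ^ 2 * (3 * X ⟨3, by omega⟩ - X ⟨1, by omega⟩) -
    3 * X ⟨0, by omega⟩ * X ⟨1, by omega⟩ * X ⟨2, by omega⟩

/-- `N = N(x₂) = x₂^p - x₁^{p-1} x₂`. -/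
def nrm (p k : ℕ) (h : 4 ≤ k) : MvPolynomial (Fin k) F :=
  X ⟨1, by omega⟩ ^ p - X ⟨0, by omega⟩ ^ (p - 1) * X ⟨1, by omega⟩

/-!
Reduction modulo `x₁` (the substitution `x₁ ↦ 0`) sends `ℓ₂, ℓ₃, N` to `x₂², x₂³, x₂^p`, so
`ℓ₃ N ≡ ℓ₂^{(p+3)/2}` modulo `x₁`; as `x₁` is an invariant non-zero-divisor, the cofactor is again
invariant. If `ℓ₃ = u ℓ₁ + v ℓ₂` with `u, v` invariant, reducing modulo `x₁` gives `v ≡ x₂`, i.e.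
`v = x₂ + x₁ w`; then `σ v = v` forces `σ w = w - 1`, impossible since `σ` preserves constant
terms. Hence `N` is a zero divisor modulo `(ℓ₁, ℓ₂)R`.

For algebraic independence, over an algebraically closed field the values of `(ℓ₁, ℓ₂, N)` cover
every triple with nonzero first entry (solve `t^p - a^{p-1} t = c` for `x₂`, then `ℓ₂ = b` is linear
in `x₃`), in particular a generic point of affine `3`-space.
-/

namespace MvPolynomial

variable {R σ : Type*} [CommRing R] [DecidableEq σ]

theorem X_dvd_sub_aeval_update_zero (i : σ) (f : MvPolynomial σ R) :
    X i ∣ f - aeval (Function.update X i 0) f := by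
  rw [← Ideal.mem_span_singleton, ← Ideal.Quotient.eq]
  have : (Ideal.Quotient.mkₐ R (Ideal.span {X i})).comp (aeval (Function.update X i 0)) =
      Ideal.Quotient.mkₐ R (Ideal.span {X i}) := by
    ext j
    by_cases hj : j = i
    · subst hj
      simp
    · simp [hj]
  exact (DFunLike.congr_fun this f).symm

theorem X_dvd_of_aeval_update_zero_eq_zero {i : σ} {f : MvPolynomial σ R}
    (hf : aeval (Function.update X i 0) f = (0 : MvPolynomial σ R)) : X i ∣ f := by
  simpa only [hf, sub_zero] using X_dvd_sub_aeval_update_zero i f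

end MvPolynomial

theorem RingTheory.Sequence.IsWeaklyRegular.mem_span_pair_of_mul_mem {R : Type*} [CommRing R]
    {a b c x : R} (h : IsWeaklyRegular R [a, b, c]) (hx : c * x ∈ Ideal.span {a, b}) :
    x ∈ Ideal.span {a, b} := by
  have hc := h.regular_mod_prev 2 (by simp)
  have hI : Ideal.ofList ([a, b, c].take 2) • ⊤ = Ideal.span {a, b} := by
    simp [Ideal.ofList_cons, Ideal.span_insert]
  rw [hI] at hc
  exact mem_of_isSMulRegular_quotient_of_smul_mem hc hx

theorem exists_pow_sub_mul_eq {K : Type*} [Field K] [IsAlgClosed K] {p : ℕ} (hp : 1 < p)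
    (a c : K) : ∃ t : K, t ^ p - a * t = c := by
  have hdeg : (Polynomial.X ^ p - Polynomial.C a * Polynomial.X - Polynomial.C c).degree ≠ 0 := by
    rw [sub_sub, Polynomial.degree_sub_eq_left_of_degree_lt] <;> rw [Polynomial.degree_X_pow]
    · exact_mod_cast (by omega : p ≠ 0)
    · exact Polynomial.degree_linear_le.trans_lt (by exact_mod_cast hp)
  obtain ⟨t, ht⟩ := IsAlgClosed.exists_root _ hdeg
  exact ⟨t, by simpa [sub_eq_zero] using ht⟩

section Invariants

variable {F} {n : ℕ} {σ : MvPolynomial (Fin n) F →ₐ[F] MvPolynomial (Fin n) F}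

theorem mem_inva_iff {f : MvPolynomial (Fin n) F} : f ∈ inva F σ ↔ σ f = f :=
  Iff.rfl

theorem mem_inva_of_mul_mem {a g : MvPolynomial (Fin n) F} (ha : a ∈ inva F σ) (ha0 : a ≠ 0)
    (hag : a * g ∈ inva F σ) : g ∈ inva F σ := by
  rw [mem_inva_iff, map_mul, mem_inva_iff.1 ha] at hag
  exact mul_left_cancel₀ ha0 hag

theorem mem_span_singleton_of_coe_dvd {a x : inva F σ} (ha0 : (a : MvPolynomial (Fin n) F) ≠ 0)
    (h : (a : MvPolynomial (Fin n) F) ∣ x) : x ∈ Ideal.span {a} := by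
  obtain ⟨g, hg⟩ := h
  have hg' : g ∈ inva F σ := mem_inva_of_mul_mem a.2 ha0 (hg ▸ x.2)
  exact Ideal.mem_span_singleton'.2 ⟨⟨g, hg'⟩, Subtype.ext (by simp [hg, mul_comm])⟩

end Invariants

section JordanBlock

variable {F}

theorem sigPlusK_X (k : ℕ) (i : Fin k) : sigPlusK F k (X i) = (if i.1 = 0 then 0 else
    X ⟨i.1 - 1, lt_of_le_of_lt (Nat.sub_le _ _) i.isLt⟩) + X i :=
  aeval_X _ _

theorem constantCoeff_sigPlusK (k : ℕ) (f : MvPolynomial (Fin k) F) :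
    constantCoeff (sigPlusK F k f) = constantCoeff f := by
  induction f using MvPolynomial.induction_on with
  | C a => simp [sigPlusK]
  | add f g hf hg => rw [map_add, map_add, map_add, hf, hg]
  | mul_X f i hf =>
    rw [map_mul, map_mul, map_mul, hf, sigPlusK_X]
    split_ifs <;> simp

theorem X_one_add_X_zero_mul_not_mem_inva {k : ℕ} (hk : 2 ≤ k) (w : MvPolynomial (Fin k) F) :
    X ⟨1, by omega⟩ + X ⟨0, by omega⟩ * w ∉ inva F (sigPlusK F k) := by
  intro h
  rw [mem_inva_iff, map_add, map_mul, sigPlusK_X, sigPlusK_X] at h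
  simp only [Nat.one_ne_zero, Nat.sub_self, if_false, if_true, zero_add] at h
  have hw : sigPlusK F k w + 1 = w :=
    mul_left_cancel₀ (X_ne_zero (⟨0, by omega⟩ : Fin k)) (by linear_combination h)
  simpa [constantCoeff_sigPlusK] using congrArg constantCoeff hw

theorem ell1_mem_inva {k : ℕ} (hk : 4 ≤ k) : ell1 F k hk ∈ inva F (sigPlusK F k) := by
  simp [mem_inva_iff, ell1, sigPlusK_X]

theorem ell2_mem_inva {k : ℕ} (hk : 4 ≤ k) : ell2 F k hk ∈ inva F (sigPlusK F k) := by
  simp only [ell2, mem_inva_iff, map_sub, map_pow, sigPlusK_X, one_ne_zero, ↓reduceIte, tsub_self,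
    map_mul, zero_add, map_add, map_ofNat, OfNat.ofNat_ne_zero, Nat.add_one_sub_one]
  ring

theorem ell3_mem_inva {k : ℕ} (hk : 4 ≤ k) : ell3 F k hk ∈ inva F (sigPlusK F k) := by
  simp only [ell3, mem_inva_iff, map_sub, map_add, map_pow, sigPlusK_X, one_ne_zero, ↓reduceIte,
    tsub_self, map_mul, zero_add, map_ofNat, OfNat.ofNat_ne_zero, Nat.add_one_sub_one]
  ring

theorem nrm_mem_inva {k : ℕ} (hk : 4 ≤ k) (p : ℕ) [Fact p.Prime] [CharP F p] :
    nrm F p k hk ∈ inva F (sigPlusK F k) := by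
  simp only [nrm, mem_inva_iff, map_sub, map_pow, sigPlusK_X, one_ne_zero, ↓reduceIte, tsub_self,
    add_pow_char, map_mul, zero_add]
  linear_combination
    -mul_pow_sub_one (Fact.out : p.Prime).ne_zero (X ⟨0, by omega⟩ : MvPolynomial (Fin k) F)

end JordanBlock

section Relations

variable {F}

theorem ell1_dvd_ell3_mul_nrm_sub_ell2_pow {p k : ℕ} (hk : 4 ≤ k) (hp : Odd p) (hp1 : 1 < p) :
    ell1 F k hk ∣ ell3 F k hk * nrm F p k hk - ell2 F k hk ^ ((p + 3) / 2) := by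
  apply X_dvd_of_aeval_update_zero_eq_zero
  obtain ⟨r, rfl⟩ := hp
  rw [show (2 * r + 1 + 3) / 2 = r + 2 by omega]
  simp only [aeval_eq_bind₁, ell3, nrm, add_tsub_cancel_right, ell2, map_sub, map_mul, map_add,
    map_pow, bind₁_X_right, ne_eq, Fin.mk.injEq, one_ne_zero, not_false_eq_true,
    Function.update_of_ne, Function.update_self, OfNat.ofNat_ne_zero, zero_pow, zero_mul, add_zero,
    mul_zero, sub_zero, show 2 * r ≠ 0 by omega]
  ring

theorem ell3_not_mem_span_ell1_ell2 {k : ℕ} (hk : 4 ≤ k)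
    (h1 : ell1 F k hk ∈ inva F (sigPlusK F k)) (h2 : ell2 F k hk ∈ inva F (sigPlusK F k))
    (h3 : ell3 F k hk ∈ inva F (sigPlusK F k)) :
    (⟨ell3 F k hk, h3⟩ : inva F (sigPlusK F k)) ∉
      Ideal.span {⟨ell1 F k hk, h1⟩, ⟨ell2 F k hk, h2⟩} := by
  rw [Ideal.mem_span_pair]
  rintro ⟨u, v, huv⟩
  set ε := aeval (R := F) (Function.update (X : Fin k → MvPolynomial (Fin k) F) ⟨0, by omega⟩ 0)
  have hεv : ε v * X ⟨1, by omega⟩ ^ 2 = X ⟨1, by omega⟩ ^ 3 := by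
    simpa [ell1, ell2, ell3, ε] using congrArg (ε ∘ Subtype.val) huv
  replace hεv : ε v = X ⟨1, by omega⟩ :=
    mul_right_cancel₀ (pow_ne_zero 2 (X_ne_zero _)) (hεv.trans (by ring))
  obtain ⟨w, hw⟩ := X_dvd_sub_aeval_update_zero (⟨0, by omega⟩ : Fin k) (v : MvPolynomial (Fin k) F)
  apply X_one_add_X_zero_mul_not_mem_inva (by omega : 2 ≤ k) w
  convert v.2 using 1
  linear_combination -hw - hεv

theorem exists_aeval_ell1_ell2_nrm_eq {K : Type*} [Field K] [IsAlgClosed K] [Algebra F K]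
    {p k : ℕ} (hk : 4 ≤ k) (hp : 1 < p) (h2 : (2 : F) ≠ 0) {a b c : K} (ha : a ≠ 0) :
    ∃ u : Fin k → K, aeval u (ell1 F k hk) = a ∧ aeval u (ell2 F k hk) = b ∧
      aeval u (nrm F p k hk) = c := by
  obtain ⟨t, ht⟩ := exists_pow_sub_mul_eq hp (a ^ (p - 1)) c
  have h2K : (2 : K) ≠ 0 := by
    rw [← map_ofNat (algebraMap F K)]
    exact (map_ne_zero _).2 h2
  refine ⟨fun i => if i.1 = 0 then a else if i.1 = 1 then t else
    if i.1 = 2 then (t ^ 2 - a * t - b) / (2 * a) else 0, ?_, ?_, ?_⟩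
  · simp [ell1]
  · simp only [ell2, map_sub, map_pow, aeval_X, one_ne_zero, ↓reduceIte, map_mul, map_add,
      aeval_ofNat, OfNat.ofNat_ne_zero, OfNat.ofNat_ne_one]
    field_simp
    ring
  · simpa [nrm] using ht

theorem algebraicIndependent_ell1_ell2_nrm {p k : ℕ} (hk : 4 ≤ k) (hp : 2 < p) [CharP F p] :
    AlgebraicIndependent F ![ell1 F k hk, ell2 F k hk, nrm F p k hk] := by
  let P := MvPolynomial (Fin 3) F
  let K := FractionRing P
  let Ω := AlgebraicClosure K
  have hy : AlgebraicIndependent F (algebraMap K Ω ∘ algebraMap P K ∘ X) :=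
    ((algebraicIndependent_X (Fin 3) F).map' (f := IsScalarTower.toAlgHom F P K)
      (IsFractionRing.injective P K)).map' (f := IsScalarTower.toAlgHom F K Ω)
      (algebraMap K Ω).injective
  have h2 : (2 : F) ≠ 0 := by exact_mod_cast CharP.cast_ne_zero_of_ne_of_prime F Nat.prime_two hp.ne'
  obtain ⟨u, hu1, hu2, hu3⟩ := exists_aeval_ell1_ell2_nrm_eq (F := F) (p := p) hk (by omega) h2
    (a := algebraMap K Ω (algebraMap P K (X 0))) (b := algebraMap K Ω (algebraMap P K (X 1)))
    (c := algebraMap K Ω (algebraMap P K (X 2))) (hy.ne_zero 0)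
  refine AlgebraicIndependent.of_comp (aeval u) ?_
  convert hy using 1
  ext i
  fin_cases i <;> simp [hu1, hu2, hu3]

end Relations

theorem stmt15 (p : ℕ) (hp : Nat.Prime p) (hp2 : 2 < p) [CharP F p]
    (k : ℕ) (hk4 : 4 ≤ k) :
    ell1 F k hk4 ∈ inva F (sigPlusK F k) ∧
    ell2 F k hk4 ∈ inva F (sigPlusK F k) ∧
    ell3 F k hk4 ∈ inva F (sigPlusK F k) ∧
    nrm F p k hk4 ∈ inva F (sigPlusK F k) ∧
    ∀ (h1 : ell1 F k hk4 ∈ inva F (sigPlusK F k))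
      (h2 : ell2 F k hk4 ∈ inva F (sigPlusK F k))
      (h3 : ell3 F k hk4 ∈ inva F (sigPlusK F k))
      (hN : nrm F p k hk4 ∈ inva F (sigPlusK F k)),
      ((⟨ell3 F k hk4, h3⟩ : ↥(inva F (sigPlusK F k))) * ⟨nrm F p k hk4, hN⟩ -
          (⟨ell2 F k hk4, h2⟩ : ↥(inva F (sigPlusK F k))) ^ ((p + 3) / 2) ∈
        Ideal.span {(⟨ell1 F k hk4, h1⟩ : ↥(inva F (sigPlusK F k)))}) ∧
      ((⟨ell3 F k hk4, h3⟩ : ↥(inva F (sigPlusK F k))) * ⟨nrm F p k hk4, hN⟩ ∈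
        Ideal.span {(⟨ell1 F k hk4, h1⟩ : ↥(inva F (sigPlusK F k))),
          ⟨ell2 F k hk4, h2⟩}) ∧
      ((⟨ell3 F k hk4, h3⟩ : ↥(inva F (sigPlusK F k))) ∉
        Ideal.span {(⟨ell1 F k hk4, h1⟩ : ↥(inva F (sigPlusK F k))),
          ⟨ell2 F k hk4, h2⟩}) ∧
      AlgebraicIndependent F
        ![(⟨ell1 F k hk4, h1⟩ : ↥(inva F (sigPlusK F k))),
          ⟨ell2 F k hk4, h2⟩, ⟨nrm F p k hk4, hN⟩] ∧
      ¬ RingTheory.Sequence.IsRegular (↥(inva F (sigPlusK F k)))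
          [(⟨ell1 F k hk4, h1⟩ : ↥(inva F (sigPlusK F k))),
            ⟨ell2 F k hk4, h2⟩, ⟨nrm F p k hk4, hN⟩] := by
  have := Fact.mk hp
  refine ⟨ell1_mem_inva hk4, ell2_mem_inva hk4, ell3_mem_inva hk4, nrm_mem_inva hk4 p, ?_⟩
  intro h1 h2 h3 hN
  have hA : (⟨ell3 F k hk4, h3⟩ : inva F (sigPlusK F k)) * ⟨nrm F p k hk4, hN⟩ -
      ⟨ell2 F k hk4, h2⟩ ^ ((p + 3) / 2) ∈ Ideal.span {⟨ell1 F k hk4, h1⟩} :=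
    mem_span_singleton_of_coe_dvd (X_ne_zero _)
      (ell1_dvd_ell3_mul_nrm_sub_ell2_pow hk4 (hp.odd_of_ne_two hp2.ne') hp.one_lt)
  have hB : (⟨ell3 F k hk4, h3⟩ : inva F (sigPlusK F k)) * ⟨nrm F p k hk4, hN⟩ ∈
      Ideal.span {⟨ell1 F k hk4, h1⟩, ⟨ell2 F k hk4, h2⟩} := by
    rw [← sub_add_cancel (_ * _) ((⟨ell2 F k hk4, h2⟩ : inva F (sigPlusK F k)) ^ ((p + 3) / 2))]
    refine Ideal.add_mem _ (Ideal.span_mono (by simp) hA) ?_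
    exact Ideal.pow_mem_of_mem _ (Ideal.subset_span (by simp)) _ (by omega)
  have hC := ell3_not_mem_span_ell1_ell2 hk4 h1 h2 h3
  refine ⟨hA, hB, hC, ?_, fun hreg => hC ?_⟩
  · refine AlgebraicIndependent.of_comp (inva F (sigPlusK F k)).val ?_
    convert algebraicIndependent_ell1_ell2_nrm (F := F) hk4 hp2 using 1
    ext i
    fin_cases i <;> rfl
  · exact hreg.toIsWeaklyRegular.mem_span_pair_of_mul_mem (by rwa [mul_comm])

end
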